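/- arXiv:2505.04933 — 3 statements merged into one kernel-verified Lean document; each statement's English description precedes it below -/
import Mathlib

section
/- Let U be a finite index set and n a positive integer. For each u ∈ U let R_u and D_u be n×n complex Hermitian positive semidefinite matrices, and let σ > 0 be a real number. Set C_u = R_u + σ·I and C_{u,all} = R_u + D_u + σ·I; both are Hermitian positive definite, hence invertible. Then Σ_{u∈U} Re tr(R_u − R_u · C_{u,all}⁻¹ · R_u) ≥ Σ_{u∈U} Re tr(R_u − R_u · C_u⁻¹ · R_u). -/
/-!
With the L2 operator norm, square complex matrices form a C⋆-algebra whose order is the Loewner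
order, and there inversion is antitone on strictly positive elements. Hence
`R + σ I ≤ R + D + σ I` gives `(R + D + σ I)⁻¹ ≤ (R + σ I)⁻¹`; conjugating by the Hermitian `R`
and taking real traces, which are monotone, compares the two estimation errors user by user.
-/

open ComplexOrder
open scoped MatrixOrder Matrix.Norms.L2Operator

namespace Matrix

variable {n : Type*} [Fintype n]

theorem re_trace_le_re_trace {𝕜 : Type*} [RCLike 𝕜] {A B : Matrix n n 𝕜} (hAB : A ≤ B) :
    RCLike.re A.trace ≤ RCLike.re B.trace :=
  (RCLike.le_iff_re_im.mp ((tracePositiveLinearMap n 𝕜 𝕜).monotone hAB)).1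

variable [DecidableEq n]

theorem PosDef.inv_le_inv_of_le {A B : Matrix n n ℂ} (hA : A.PosDef) (hAB : A ≤ B) :
    B⁻¹ ≤ A⁻¹ := by
  simpa only [nonsing_inv_eq_ringInverse] using
    CStarAlgebra.ringInverse_le_ringInverse hAB hA.isStrictlyPositive

theorem re_trace_sub_mul_inv_mul_le {R A B : Matrix n n ℂ} (hR : R.IsHermitian)
    (hA : A.PosDef) (hAB : A ≤ B) :
    (R - R * A⁻¹ * R).trace.re ≤ (R - R * B⁻¹ * R).trace.re :=
  re_trace_le_re_trace <| sub_le_sub_left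
    (IsSelfAdjoint.conjugate_le_conjugate (hA.inv_le_inv_of_le hAB) hR) R

end Matrix

theorem stmt_0_general {U : Type*} [Fintype U] {n : ℕ}
    (R D : U → Matrix (Fin n) (Fin n) ℂ)
    (hR : ∀ u, (R u).PosSemidef) (hD : ∀ u, (D u).PosSemidef)
    (σ : ℝ) (hσ : 0 < σ) :
    ∑ u : U, (Matrix.trace
        (R u - R u * (R u + D u + (σ : ℂ) • (1 : Matrix (Fin n) (Fin n) ℂ))⁻¹ * R u)).re
      ≥ ∑ u : U, (Matrix.trace
        (R u - R u * (R u + (σ : ℂ) • (1 : Matrix (Fin n) (Fin n) ℂ))⁻¹ * R u)).re := by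
  refine Finset.sum_le_sum fun u _ => Matrix.re_trace_sub_mul_inv_mul_le (hR u).isHermitian ?_ ?_
  · exact .posSemidef_add (hR u) (.smul .one (Complex.zero_lt_real.mpr hσ))
  · rw [Matrix.le_iff, add_sub_add_right_eq_sub, add_sub_cancel_left]
    exact hD u

/-- Theorem 1, lower-bound part (ε_MSE ≥ ε_MSE,min), flattened matrix form:
for each user `u`, `R u` is the Hermitian PSD pilot-segment channel covariance,
`D u` the PSD sum of inter-user interference covariances, `σ` the noise-to-pilot
power ratio, `C_u = R_u + σ I`, `C_{u,all} = R_u + D_u + σ I`. -/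
theorem stmt_0 {U : Type*} [Fintype U] {n : ℕ} (hn : 0 < n)
    (R D : U → Matrix (Fin n) (Fin n) ℂ)
    (hR : ∀ u, (R u).PosSemidef) (hD : ∀ u, (D u).PosSemidef)
    (σ : ℝ) (hσ : 0 < σ) :
    ∑ u : U, (Matrix.trace
        (R u - R u * (R u + D u + (σ : ℂ) • (1 : Matrix (Fin n) (Fin n) ℂ))⁻¹ * R u)).re
      ≥ ∑ u : U, (Matrix.trace
        (R u - R u * (R u + (σ : ℂ) • (1 : Matrix (Fin n) (Fin n) ℂ))⁻¹ * R u)).re :=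
  stmt_0_general R D hR hD σ hσ
end

section
/- Let K ≥ 1 and F_τ ≥ 1 be integers, N_τ = F_τ·K, and let k0, Δ be integers. Define the K×N_τ complex matrix V^f with entries [V^f]_{k,b} = exp(−2πi·(k0+k)·b/N_τ) for k ∈ {0,…,K−1}, b ∈ {0,…,N_τ−1}, and the K×K diagonal matrix X with diagonal entries [X]_{k,k} = exp(−2πi·(k0+k)·Δ/K). Then X·V^f = V^f·Γ_{N_τ, −Δ·F_τ}, where Γ_{N,g} is the N×N cyclic-shift permutation matrix whose (l,a) entry equals 1 if a ≡ l+g (mod N) and 0 otherwise. -/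
/-!
Write `N = Fτ K`. Right multiplication by `Γ_{N,g}` moves column `b - g` of a matrix to position
`b`, so the `(k, b)` entry of `V^f Γ_{N,-Δ Fτ}` is the DFT entry at column `b + Δ Fτ`, read modulo
`N`. Since the DFT entries are `N`-periodic in the column index, this is the entry at `b` times
`exp(-2πi (k0+k) Δ Fτ / N) = exp(-2πi (k0+k) Δ / K)`, the `k`-th diagonal entry of `X`.
-/

/-- The cyclic-shift matrix `Γ_{N,g}`: its `(l,a)` entry is `1` iff `a ≡ l + g (mod N)`. -/
noncomputable def Gamma (N : ℕ) (g : ℤ) : Matrix (Fin N) (Fin N) ℂ :=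
  Matrix.of fun l a =>
    if ((a : ℕ) : ZMod N) = ((l : ℕ) : ZMod N) + (g : ZMod N) then 1 else 0

open Complex (exp I)
open Real (pi)

theorem mul_Gamma_apply_of_natCast_eq {m : Type*} {N : ℕ} (M : Matrix m (Fin N) ℂ) (g : ℤ)
    (i : m) {a b : Fin N} (h : ((a : ℕ) : ZMod N) = (b : ℕ) - g) :
    (M * Gamma N g) i b = M i a := by
  rw [Matrix.mul_apply, Finset.sum_eq_single a]
  · simp [Gamma, h]
  · intro a' _ ha'
    have hb : ¬ ((b : ℕ) : ZMod N) = (a' : ℕ) + g := fun hb =>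
      have ha'a : ((a' : ℕ) : ZMod N) = (a : ℕ) := by rw [h, hb]; ring
      ha' (Fin.ext (((ZMod.natCast_eq_natCast_iff _ _ _).mp ha'a).eq_of_lt_of_lt a'.isLt a.isLt))
    simp [Gamma, hb]
  · simp

theorem exp_neg_two_pi_I_mul_div_eq_of_intCast_eq {N : ℕ} {m m' : ℤ}
    (h : (m : ZMod N) = m') :
    exp (-2 * pi * I * m / N) = exp (-2 * pi * I * m' / N) := by
  obtain ⟨t, ht⟩ := (ZMod.intCast_eq_intCast_iff_dvd_sub _ _ _).mp h
  rcases eq_or_ne N 0 with rfl | hN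
  · rw [show m' = m by simpa [sub_eq_zero] using ht]
  have hm' : (m' : ℂ) = m + N * t := by rw [← sub_eq_iff_eq_add']; exact_mod_cast ht
  have hN' : (N : ℂ) ≠ 0 := Nat.cast_ne_zero.mpr hN
  have : -2 * pi * I * m / N = -2 * pi * I * m' / N + t * (2 * pi * I) := by
    rw [hm']; field_simp; ring
  rw [this, Complex.exp_add, Complex.exp_int_mul_two_pi_mul_I, mul_one]

theorem stmt_7_general (K Fτ : ℕ) (k0 Δ : ℤ) :
    (Matrix.diagonal fun k : Fin K =>
        Complex.exp (-2 * (Real.pi : ℂ) * Complex.I *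
          (((k0 + (k : ℕ)) * Δ : ℤ) : ℂ) / (K : ℂ))) *
      (Matrix.of fun (k : Fin K) (b : Fin (Fτ * K)) =>
        Complex.exp (-2 * (Real.pi : ℂ) * Complex.I *
          (((k0 + (k : ℕ)) * (b : ℕ) : ℤ) : ℂ) / ((Fτ * K : ℕ) : ℂ)))
    = (Matrix.of fun (k : Fin K) (b : Fin (Fτ * K)) =>
        Complex.exp (-2 * (Real.pi : ℂ) * Complex.I *
          (((k0 + (k : ℕ)) * (b : ℕ) : ℤ) : ℂ) / ((Fτ * K : ℕ) : ℂ)))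
      * Gamma (Fτ * K) (-(Δ * Fτ)) := by
  ext k b
  have : NeZero (Fτ * K) := ⟨b.pos.ne'⟩
  have hFτ : (Fτ : ℂ) ≠ 0 := Nat.cast_ne_zero.mpr (left_ne_zero_of_mul (NeZero.ne (Fτ * K)))
  have hK : (K : ℂ) ≠ 0 := Nat.cast_ne_zero.mpr (right_ne_zero_of_mul (NeZero.ne (Fτ * K)))
  let a : Fin (Fτ * K) := ⟨((b + Δ * Fτ : ℤ) : ZMod (Fτ * K)).val, ZMod.val_lt _⟩
  have ha : ((a : ℕ) : ZMod (Fτ * K)) = (b : ℕ) - ((-(Δ * Fτ) : ℤ) : ZMod (Fτ * K)) := by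
    simp [a, ZMod.natCast_val]
  rw [Matrix.diagonal_mul, mul_Gamma_apply_of_natCast_eq _ _ _ ha, Matrix.of_apply,
    Matrix.of_apply, exp_neg_two_pi_I_mul_div_eq_of_intCast_eq (m := (k0 + k) * a)
      (m' := (k0 + k) * (b + Δ * Fτ)) (by push_cast [ha]; ring), ← Complex.exp_add]
  congr 1
  push_cast
  field_simp
  ring

/-- Structural identity `X^f_{u,u'} V^f = V^f Γ_{N_τ, −Δ F_τ}`: the frequency-domain
phase-shift diagonal matrix commutes past the partial-DFT frequency beam matrix `V^f`
at the cost of a cyclic shift of its columns. -/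
theorem stmt_7 (K Fτ : ℕ) (hK : 1 ≤ K) (hFτ : 1 ≤ Fτ) (k0 Δ : ℤ) :
    (Matrix.diagonal fun k : Fin K =>
        Complex.exp (-2 * (Real.pi : ℂ) * Complex.I *
          (((k0 + (k : ℕ)) * Δ : ℤ) : ℂ) / (K : ℂ))) *
      (Matrix.of fun (k : Fin K) (b : Fin (Fτ * K)) =>
        Complex.exp (-2 * (Real.pi : ℂ) * Complex.I *
          (((k0 + (k : ℕ)) * (b : ℕ) : ℤ) : ℂ) / ((Fτ * K : ℕ) : ℂ)))
    = (Matrix.of fun (k : Fin K) (b : Fin (Fτ * K)) =>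
        Complex.exp (-2 * (Real.pi : ℂ) * Complex.I *
          (((k0 + (k : ℕ)) * (b : ℕ) : ℤ) : ℂ) / ((Fτ * K : ℕ) : ℂ)))
      * Gamma (Fτ * K) (-(Δ * Fτ)) :=
  stmt_7_general K Fτ k0 Δ
end

section
/- Let M, K, N_p ≥ 1 and F_ϑ, F_τ, F_ν ≥ 1 be integers; set N_ϑ = F_ϑ M, N_τ = F_τ K, N_ν = F_ν N_p. Let W, W' : (ℤ/N_ϑ)×(ℤ/N_τ)×(ℤ/N_ν) → ℝ satisfy W(x)·W'(x) = 0 for every x. For q = (q1,q2,q3) and p = (p1,p2,p3) define Q(q,p) = W(q)·W'(p)·Σ_{r1=0}^{M−1} Σ_{r2=0}^{K−1} Σ_{r3=0}^{N_p−1} exp(−2πi·r1·(p1−q1)/N_ϑ)·exp(−2πi·r2·(p2−q2)/N_τ)·exp(2πi·r3·(q3−p3)/N_ν), where the differences are evaluated at any integer representatives (the value is independent of the choice). If p1−q1 is divisible by F_ϑ in ℤ/N_ϑ, p2−q2 is divisible by F_τ in ℤ/N_τ, and p3−q3 is divisible by F_ν in ℤ/N_ν, then Q(q,p) = 0. -/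
/-!
With `ω = exp(2πi/N)` a primitive `N`-th root of unity, each sum is the geometric sum
`∑_{r<M} (ω^{±d})^r` for a difference `d`. Since `F ∣ d` and `N = F M`, the ratio `ω^{±d}` is an
`M`-th root of unity, so the sum vanishes unless `ω^{±d} = 1`, i.e. `d = 0`. If all three
differences vanish then `p = q`, and `W(q) W'(q) = 0`.
-/

open Finset

theorem ZMod.natCast_dvd_val {N F : ℕ} (hFN : F ∣ N) {d : ZMod N} (hd : (F : ZMod N) ∣ d) :
    F ∣ d.val := by
  obtain ⟨x, rfl⟩ := hd
  rw [ZMod.val_mul, Nat.dvd_mod_iff hFN, ZMod.val_natCast]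
  exact ((Nat.dvd_mod_iff hFN).2 dvd_rfl).mul_right _

theorem geom_sum_eq_zero_of_pow_eq_one {R : Type*} [CommRing R] [IsDomain R] {x : R} {n : ℕ}
    (hx : x ≠ 1) (hxn : x ^ n = 1) : ∑ i ∈ range n, x ^ i = 0 := by
  have h := geom_sum_mul x n
  rw [hxn, sub_self] at h
  exact (mul_eq_zero.1 h).resolve_right (sub_ne_zero.2 hx)

namespace IsPrimitiveRoot

variable {R : Type*} [CommRing R] [IsDomain R] {ω : R} {N F M : ℕ}

theorem geom_sum_pow_eq_zero (hω : IsPrimitiveRoot ω N) (hN : N = F * M) {v : ℕ}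
    (hv : F ∣ v) (hNv : ¬ N ∣ v) : ∑ r ∈ range M, (ω ^ v) ^ r = 0 := by
  obtain ⟨e, rfl⟩ := hv
  refine geom_sum_eq_zero_of_pow_eq_one (mt (hω.pow_eq_one_iff_dvd _).1 hNv) ?_
  rw [← pow_mul, hω.pow_eq_one_iff_dvd, hN]
  exact ⟨e, by ring⟩

theorem geom_sum_pow_val_eq_zero [NeZero N] (hω : IsPrimitiveRoot ω N) (hN : N = F * M)
    {d : ZMod N} (hd : (F : ZMod N) ∣ d) (hd0 : d ≠ 0) :
    ∑ r ∈ range M, (ω ^ d.val) ^ r = 0 := by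
  refine hω.geom_sum_pow_eq_zero hN (ZMod.natCast_dvd_val ⟨M, hN⟩ hd) fun hNd ↦ hd0 ?_
  rw [← ZMod.natCast_zmod_val d, ZMod.natCast_eq_zero_iff]
  exact hNd

end IsPrimitiveRoot

namespace Complex

theorem exp_two_pi_I_mul_nat_div (r v N : ℕ) :
    exp (2 * π * I * r * v / N) = (exp (2 * π * I / N) ^ v) ^ r := by
  rw [← pow_mul, ← exp_nat_mul]
  congr 1
  push_cast
  ring

theorem exp_neg_two_pi_I_mul_nat_div (r v N : ℕ) :
    exp (-2 * π * I * r * v / N) = ((exp (2 * π * I / N))⁻¹ ^ v) ^ r := by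
  rw [← exp_neg, ← pow_mul, ← exp_nat_mul]
  congr 1
  push_cast
  ring

end Complex

theorem stmt_12_general (M K Np Fϑ Fτ Fν : ℕ)
    (Nϑ Nτ Nν : ℕ) [NeZero Nϑ] [NeZero Nτ] [NeZero Nν]
    (hϑ : Nϑ = Fϑ * M) (hτ : Nτ = Fτ * K) (hν : Nν = Fν * Np)
    (W W' : ZMod Nϑ × ZMod Nτ × ZMod Nν → ℝ)
    (hWW : ∀ x, W x * W' x = 0)
    (q1 p1 : ZMod Nϑ) (q2 p2 : ZMod Nτ) (q3 p3 : ZMod Nν)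
    (h1 : ((Fϑ : ℕ) : ZMod Nϑ) ∣ (p1 - q1))
    (h2 : ((Fτ : ℕ) : ZMod Nτ) ∣ (p2 - q2))
    (h3 : ((Fν : ℕ) : ZMod Nν) ∣ (p3 - q3)) :
    ((W (q1, q2, q3) : ℂ)) * ((W' (p1, p2, p3) : ℂ)) *
      ((∑ r1 ∈ Finset.range M,
          Complex.exp (-2 * (Real.pi : ℂ) * Complex.I * (r1 : ℂ) *
            (((p1 - q1).val : ℕ) : ℂ) / (Nϑ : ℂ))) *
       (∑ r2 ∈ Finset.range K,
          Complex.exp (-2 * (Real.pi : ℂ) * Complex.I * (r2 : ℂ) *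
            (((p2 - q2).val : ℕ) : ℂ) / (Nτ : ℂ))) *
       (∑ r3 ∈ Finset.range Np,
          Complex.exp (2 * (Real.pi : ℂ) * Complex.I * (r3 : ℂ) *
            (((q3 - p3).val : ℕ) : ℂ) / (Nν : ℂ)))) = 0 := by
  have hω (N : ℕ) [NeZero N] := Complex.isPrimitiveRoot_exp N (NeZero.ne N)
  simp_rw [Complex.exp_neg_two_pi_I_mul_nat_div, Complex.exp_two_pi_I_mul_nat_div]
  by_cases hpq : p1 = q1 ∧ p2 = q2 ∧ p3 = q3
  · obtain ⟨rfl, rfl, rfl⟩ := hpq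
    rw [← Complex.ofReal_mul, hWW, Complex.ofReal_zero, zero_mul]
  obtain hd | hd | hd : p1 - q1 ≠ 0 ∨ p2 - q2 ≠ 0 ∨ q3 - p3 ≠ 0 := by
    simp only [sub_ne_zero, ne_comm (a := q3)]
    tauto
  · rw [(hω Nϑ).inv.geom_sum_pow_val_eq_zero hϑ h1 hd]
    ring
  · rw [(hω Nτ).inv.geom_sum_pow_val_eq_zero hτ h2 hd]
    ring
  · rw [(hω Nν).geom_sum_pow_val_eq_zero hν (dvd_sub_comm.mp h3) hd]
    ring

/-- Vanishing of the cross-covariance entries (51)–(53) in Appendix A of the paper: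
if the triple-beam domain power distributions `W` and `W'` never overlap
(`W(x)·W'(x) = 0` for all `x`) and the index differences `p−q` are divisible by the
fine factors, then the entry
`Q(q,p) = W(q)·W'(p)·α_M((p₁−q₁)/F_ϑ)·α_K((p₂−q₂)/F_τ)·α_{N_p}((q₃−p₃)/F_ν)` vanishes.
The differences are evaluated at the canonical representatives `ZMod.val`; the value of
each root-of-unity sum is independent of this choice. -/
theorem stmt_12 (M K Np Fϑ Fτ Fν : ℕ)
    (hM : 1 ≤ M) (hK : 1 ≤ K) (hNp : 1 ≤ Np)
    (hFϑ : 1 ≤ Fϑ) (hFτ : 1 ≤ Fτ) (hFν : 1 ≤ Fν)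
    (Nϑ Nτ Nν : ℕ) [NeZero Nϑ] [NeZero Nτ] [NeZero Nν]
    (hϑ : Nϑ = Fϑ * M) (hτ : Nτ = Fτ * K) (hν : Nν = Fν * Np)
    (W W' : ZMod Nϑ × ZMod Nτ × ZMod Nν → ℝ)
    (hWW : ∀ x, W x * W' x = 0)
    (q1 p1 : ZMod Nϑ) (q2 p2 : ZMod Nτ) (q3 p3 : ZMod Nν)
    (h1 : ((Fϑ : ℕ) : ZMod Nϑ) ∣ (p1 - q1))
    (h2 : ((Fτ : ℕ) : ZMod Nτ) ∣ (p2 - q2))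
    (h3 : ((Fν : ℕ) : ZMod Nν) ∣ (p3 - q3)) :
    ((W (q1, q2, q3) : ℂ)) * ((W' (p1, p2, p3) : ℂ)) *
      ((∑ r1 ∈ Finset.range M,
          Complex.exp (-2 * (Real.pi : ℂ) * Complex.I * (r1 : ℂ) *
            (((p1 - q1).val : ℕ) : ℂ) / (Nϑ : ℂ))) *
       (∑ r2 ∈ Finset.range K,
          Complex.exp (-2 * (Real.pi : ℂ) * Complex.I * (r2 : ℂ) *
            (((p2 - q2).val : ℕ) : ℂ) / (Nτ : ℂ))) *
       (∑ r3 ∈ Finset.range Np,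
          Complex.exp (2 * (Real.pi : ℂ) * Complex.I * (r3 : ℂ) *
            (((q3 - p3).val : ℕ) : ℂ) / (Nν : ℂ)))) = 0 :=
  stmt_12_general M K Np Fϑ Fτ Fν Nϑ Nτ Nν hϑ hτ hν W W' hWW q1 p1 q2 p2 q3 p3 h1 h2 h3
end
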